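/- For every integer k ≥ 3, the set 𝒫 = ⋃_{n=0}^∞ P_n satisfies the defining property of the P-positions: for every position u, u ∈ 𝒫 if and only if every follower of u lies outside 𝒫. -/

import Mathlib

/-- `T n` is the `n`-th triangular number `n(n+1)/2`. -/
def T (n : ℕ) : ℕ := n * (n + 1) / 2

/-- `Pset k n` is the set `Pₙ` of positions `(T n, m₁, …, m_{k-1})` (nondecreasing
`k`-tuples) whose first component is `T n` and whose remaining components sum to
`(k-1)·T n + n` (each of them is automatically `≥ T n` by monotonicity). -/
def Pset (k : ℕ) [NeZero k] (n : ℕ) : Set (Fin k → ℕ) :=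
  {u | Monotone u ∧ u 0 = T n ∧
    ∑ i ∈ Finset.univ.erase 0, u i = (k - 1) * T n + n}

/-- A raw move of the `k`-heap game (before re-sorting): either (i) remove a positive
number of tokens from at least one and at most `k-1` heaps, or (ii) remove the same
positive number `t` of tokens from all `k` heaps (`t` at most the smallest heap). -/
def MoveRaw (k : ℕ) (u w : Fin k → ℕ) : Prop :=
  ((∀ i, w i ≤ u i) ∧ u ≠ w ∧
    (Finset.univ.filter fun i => w i < u i).card ≤ k - 1)
  ∨ (∃ t > 0, ∀ i, u i = w i + t)

/-- `v` is a follower of `u`: `v` is obtained from `u` by one move, with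
the components re-sorted into nondecreasing order. -/
def Follower (k : ℕ) (u v : Fin k → ℕ) : Prop :=
  ∃ w : Fin k → ℕ, MoveRaw k u w ∧ Monotone v ∧ ∃ σ : Equiv.Perm (Fin k), v = w ∘ σ


/-!
A position lies in `P_n` iff its smallest heap is `T n` and its total is `k * T n + n`; its heaps
then all lie in `[T n, T n + n]`. A move of type (i) leaves some heap `j` untouched, and if both
ends lie in `𝒫`, say in `P_n` and `P_m`, then `T m ≤ T n ≤ u j ≤ T m + m < T (m + 1)` forces
`m = n`, which is impossible since the total dropped. A move of type (ii) lowers the minimum by `t`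
and the total by `k * t`, which forces `m = n` and `t = 0`.

Conversely, let `u ∉ 𝒫` and `T n ≤ u 0 < T (n + 1)`. If the excess `m = ∑ u - k * u 0` is less
than `n`, subtracting `u 0 - T m` from every heap lands in `P_m`. Otherwise a move of type (i)
reaches `P_n`: one heap is lowered to `T n`, one heap among `u 0, u 1` that is at most `T n + n`
is kept, and the remaining heaps (there is one more since `k ≥ 3`) are lowered until the total is
`k * T n + n`.
-/

open Finset

theorem T_succ (n : ℕ) : T (n + 1) = T n + n + 1 := by
  unfold T
  rw [show (n + 1) * (n + 1 + 1) = n * (n + 1) + (n + 1) * 2 by ring,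
    Nat.add_mul_div_right _ _ two_pos]
  ring

theorem T_strictMono : StrictMono T :=
  strictMono_nat_of_lt_succ fun n => by rw [T_succ]; omega

theorem exists_T_le_lt_T_succ (x : ℕ) : ∃ n, T n ≤ x ∧ x < T (n + 1) := by
  induction x with
  | zero => exact ⟨0, le_rfl, by simp [T]⟩
  | succ x ih =>
    obtain ⟨n, hn, hx⟩ := ih
    rcases (Nat.succ_le_of_lt hx).lt_or_eq with h | h
    · exact ⟨n, by omega, h⟩
    · exact ⟨n + 1, h.ge, by rw [T_succ (n + 1)]; omega⟩

section Sums

variable {ι : Type*}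

theorem card_mul_add_sub_le_sum {s : Finset ι} {f : ι → ℕ} {c : ℕ} {i : ι} (hi : i ∈ s)
    (hc : ∀ j ∈ s, c ≤ f j) : #s * c + (f i - c) ≤ ∑ j ∈ s, f j := by
  have hsub : ∑ j ∈ s, (f j - c) = ∑ j ∈ s, f j - #s * c := by
    rw [sum_tsub_distrib s hc, sum_const, smul_eq_mul]
  have hone : f i - c ≤ ∑ j ∈ s, (f j - c) :=
    single_le_sum (f := fun j => f j - c) (fun _ _ => Nat.zero_le _) hi
  have hcard : #s * c ≤ ∑ j ∈ s, f j := by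
    simpa using card_nsmul_le_sum s f c hc
  omega

theorem sum_update_add_self [Fintype ι] [DecidableEq ι] (f : ι → ℕ) (i : ι) (b : ℕ) :
    ∑ l, Function.update f i b l + f i = ∑ l, f l + b := by
  rw [sum_update_of_mem (mem_univ i), sdiff_singleton_eq_erase, ← add_sum_erase univ f (mem_univ i)]
  ring

theorem exists_le_le_sum_eq [DecidableEq ι] (s : Finset ι) {lo hi : ι → ℕ} (hlohi : lo ≤ hi)
    {c : ℕ} (hlo : ∑ i ∈ s, lo i ≤ c) (hhi : c ≤ ∑ i ∈ s, hi i) :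
    ∃ f, lo ≤ f ∧ f ≤ hi ∧ ∑ i ∈ s, f i = c := by
  induction s using Finset.induction generalizing c with
  | empty => exact ⟨lo, le_rfl, hlohi, by simp only [sum_empty] at hhi ⊢; omega⟩
  | @insert a s ha ih =>
    rw [sum_insert ha] at hlo hhi
    obtain ⟨x, hlox, hxhi, hxc⟩ : ∃ x, lo a ≤ x ∧ x ≤ hi a ∧
        ∑ i ∈ s, lo i ≤ c - x ∧ c - x ≤ ∑ i ∈ s, hi i ∧ x ≤ c :=
      have hloa : lo a ≤ hi a := hlohi a
      have hs : ∑ i ∈ s, lo i ≤ ∑ i ∈ s, hi i := sum_le_sum fun i _ => hlohi i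
      ⟨max (lo a) (c - ∑ i ∈ s, hi i), by omega⟩
    obtain ⟨f, hlof, hfhi, hf⟩ := ih hxc.1 hxc.2.1
    refine ⟨Function.update f a x, fun i => ?_, fun i => ?_, ?_⟩
    · rcases eq_or_ne i a with rfl | h
      · simpa using hlox
      · simpa [h] using hlof i
    · rcases eq_or_ne i a with rfl | h
      · simpa using hxhi
      · simpa [h] using hfhi i
    · rw [sum_insert ha, Function.update_self, sum_update_of_notMem ha, hf]
      omega

end Sums

section Game

variable {k : ℕ} {n m : ℕ} {u v w : Fin k → ℕ}

/-- The unsorted positions whose nondecreasing rearrangement lies in `Pset k n`. -/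
def UnsortedPset (k n : ℕ) : Set (Fin k → ℕ) :=
  {w | (∀ l, T n ≤ w l) ∧ (∃ j, w j = T n) ∧ ∑ l, w l = k * T n + n}

theorem le_T_add_of_mem_UnsortedPset (hw : w ∈ UnsortedPset k n) (l : Fin k) :
    w l ≤ T n + n := by
  have := card_mul_add_sub_le_sum (mem_univ l) fun j _ => hw.1 j
  rw [card_fin, hw.2.2] at this
  omega

theorem follower_comp_sort (h : MoveRaw k u w) : Follower k u (w ∘ Tuple.sort w) :=
  ⟨w, h, Tuple.monotone_sort w, _, rfl⟩

theorem moveRaw_of_le_of_eq (hle : w ≤ u) (hne : w ≠ u) {j : Fin k} (hj : w j = u j) :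
    MoveRaw k u w := by
  refine Or.inl ⟨hle, hne.symm, ?_⟩
  calc #(univ.filter fun i => w i < u i) ≤ #(univ.erase j) :=
        card_le_card fun i hi => mem_erase.2 ⟨by rintro rfl; simp [hj] at hi, mem_univ i⟩
    _ = k - 1 := by rw [card_erase_of_mem (mem_univ j), card_fin]

variable [NeZero k]

theorem mem_Pset_iff : v ∈ Pset k n ↔ Monotone v ∧ v 0 = T n ∧ ∑ i, v i = k * T n + n := by
  have hsplit := add_sum_erase univ v (mem_univ 0)
  have hk := Nat.sub_one_mul k (T n)
  have hTk : T n ≤ k * T n := Nat.le_mul_of_pos_left _ (NeZero.pos k)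
  exact ⟨fun ⟨hv, h0, hs⟩ => ⟨hv, h0, by omega⟩, fun ⟨hv, h0, hs⟩ => ⟨hv, h0, by omega⟩⟩

theorem comp_perm_mem_Pset_iff {σ : Equiv.Perm (Fin k)} (h : Monotone (w ∘ σ)) :
    w ∘ σ ∈ Pset k n ↔ w ∈ UnsortedPset k n := by
  have hmin : ∀ l, (w ∘ σ) 0 ≤ w l := fun l => by
    simpa using h (Fin.zero_le (σ.symm l))
  have hsum : ∑ i, (w ∘ σ) i = ∑ i, w i := Equiv.sum_comp σ w
  rw [mem_Pset_iff, hsum]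
  constructor
  · rintro ⟨-, h0, hs⟩
    exact ⟨fun l => h0 ▸ hmin l, ⟨σ 0, h0⟩, hs⟩
  · rintro ⟨hlb, ⟨j, hj⟩, hs⟩
    exact ⟨h, le_antisymm (hj ▸ hmin j) (hlb _), hs⟩

theorem notMem_UnsortedPset_of_le (hu : u ∈ Pset k n) (hle : w ≤ u) (hne : w ≠ u) {j : Fin k}
    (hj : w j = u j) : w ∉ UnsortedPset k m := by
  intro hw
  obtain ⟨huo, hu0, husum⟩ := mem_Pset_iff.1 hu
  have hmn : m ≤ n := T_strictMono.le_iff_le.1 (hu0 ▸ (hw.1 0).trans (hle 0))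
  have hTn : T n ≤ T m + m :=
    calc T n = u 0 := hu0.symm
      _ ≤ u j := huo (Fin.zero_le j)
      _ = w j := hj.symm
      _ ≤ T m + m := le_T_add_of_mem_UnsortedPset hw j
  have hnm : n < m + 1 := T_strictMono.lt_iff_lt.1 (by rw [T_succ]; omega)
  obtain rfl : m = n := by omega
  have := Fintype.sum_strictMono (lt_of_le_of_ne hle hne)
  simp only [hw.2.2, husum] at this
  exact lt_irrefl _ this

theorem notMem_UnsortedPset_of_add (hu : u ∈ Pset k n) {t : ℕ} (ht : 0 < t)
    (hw : ∀ i, u i = w i + t) : w ∉ UnsortedPset k m := by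
  rintro ⟨hlb, ⟨j, hj⟩, hwsum⟩
  obtain ⟨huo, hu0, husum⟩ := mem_Pset_iff.1 hu
  have hw0 : w 0 = T m := by
    have := huo (Fin.zero_le j)
    rw [hw, hw] at this
    exact le_antisymm (by omega) (hlb 0)
  have hTn : T n = T m + t := by rw [← hu0, hw, hw0]
  have hsum : ∑ i, u i = ∑ i, w i + k * t := by
    simp only [hw, sum_add_distrib, sum_const, card_fin, smul_eq_mul]
  have hk : k * T n = k * T m + k * t := by rw [hTn, mul_add]
  obtain rfl : m = n := by omega
  omega

theorem notMem_Pset_of_follower (hu : u ∈ Pset k n) (hf : Follower k u v) : v ∉ Pset k m := by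
  obtain ⟨w, hmove, hv, σ, rfl⟩ := hf
  rw [comp_perm_mem_Pset_iff hv]
  rcases hmove with ⟨hle, hne, hcard⟩ | ⟨t, ht, hw⟩
  · obtain ⟨j, hj⟩ : ∃ j, w j = u j := by
      by_contra! hall
      have : univ.filter (fun i => w i < u i) = univ :=
        filter_true_of_mem fun i _ => lt_of_le_of_ne (hle i) (hall i)
      rw [this, card_fin] at hcard
      have := NeZero.pos k
      omega
    exact notMem_UnsortedPset_of_le hu hle (Ne.symm hne) hj
  · exact notMem_UnsortedPset_of_add hu ht hw

/-- Heap `i` is lowered to `T n`, heap `j` is kept, and the others absorb the remaining excess. -/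
theorem exists_follower_mem_Pset_of_keep (hT : ∀ l, T n ≤ u l) {i j : Fin k}
    (hij : i = j → u j = T n) (hj : u j ≤ T n + n)
    (hi : k * T n + n + u i ≤ ∑ l, u l + T n) (hlt : k * T n + n < ∑ l, u l) :
    ∃ v, Follower k u v ∧ v ∈ Pset k n := by
  classical
  set lo := Function.update (fun _ => T n) j (u j)
  set hi := Function.update u i (T n)
  have hlohi : lo ≤ hi := fun l => by
    rcases eq_or_ne l i with rfl | hli <;> rcases eq_or_ne l j with rfl | hlj <;> simp [lo, hi, *]
  have hlo_sum : ∑ l, lo l + T n = k * T n + u j := by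
    simpa [lo] using sum_update_add_self (fun _ => T n) j (u j)
  have hhi_sum : ∑ l, hi l + u i = ∑ l, u l + T n := sum_update_add_self u i (T n)
  obtain ⟨w, hlow, hwhi, hw⟩ :=
    exists_le_le_sum_eq univ hlohi (c := k * T n + n) (by omega) (by omega)
  have hwu : w ≤ u := fun l =>
    (hwhi l).trans (by rcases eq_or_ne l i with rfl | h <;> simp [hi, *])
  have hwj : w j = u j := le_antisymm (hwu j) (by simpa [lo] using hlow j)
  have hwi : w i = T n := by
    rcases eq_or_ne i j with rfl | h
    · exact hwj.trans (hij rfl)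
    · exact le_antisymm (by simpa [hi] using hwhi i) (by simpa [lo, h] using hlow i)
  have hlb : ∀ l, T n ≤ w l := fun l =>
    le_trans (by rcases eq_or_ne l j with rfl | h <;> simp [lo, *]) (hlow l)
  have hne : w ≠ u := by rintro rfl; omega
  exact ⟨_, follower_comp_sort (moveRaw_of_le_of_eq hwu hne hwj),
    (comp_perm_mem_Pset_iff (Tuple.monotone_sort w)).2 ⟨hlb, ⟨i, hwi⟩, hw⟩⟩

theorem exists_follower_mem_Pset_of_sum_lt (hu : Monotone u) (hn : T n ≤ u 0)
    (hs : ∑ l, u l < k * u 0 + n) : ∃ m v, Follower k u v ∧ v ∈ Pset k m := by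
  have hmin : k * u 0 ≤ ∑ l, u l := by
    simpa using card_nsmul_le_sum univ u (u 0) fun l _ => hu (Fin.zero_le l)
  set m := ∑ l, u l - k * u 0
  have hTm : T m < u 0 := (T_strictMono (by omega : m < n)).trans_le hn
  set t := u 0 - T m
  set w : Fin k → ℕ := fun l => u l - t with hw
  have hut : ∀ l, u l = w l + t := fun l =>
    (Nat.sub_add_cancel ((by omega : t ≤ u 0).trans (hu (Fin.zero_le l)))).symm
  have hwmono : Monotone w := fun a b hab => Nat.sub_le_sub_right (hu hab) t
  have hwsum : ∑ l, u l = ∑ l, w l + k * t := by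
    simp only [hut, sum_add_distrib, sum_const, card_fin, smul_eq_mul]
  have hk : k * t + k * T m = k * u 0 := by rw [← mul_add]; congr 1; omega
  have hw0 : w 0 = T m := by simp only [hw]; omega
  exact ⟨m, w, ⟨w, Or.inr ⟨t, by omega, hut⟩, hwmono, 1, rfl⟩,
    mem_Pset_iff.2 ⟨hwmono, hw0, by omega⟩⟩

theorem exists_follower_mem_Pset (hk : 3 ≤ k) (hu : Monotone u) (hnot : ∀ n, u ∉ Pset k n) :
    ∃ n v, Follower k u v ∧ v ∈ Pset k n := by
  obtain ⟨n, hn, hn1⟩ := exists_T_le_lt_T_succ (u 0)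
  rw [T_succ] at hn1
  by_cases hs : ∑ l, u l < k * u 0 + n
  · exact exists_follower_mem_Pset_of_sum_lt hu hn hs
  rw [not_lt] at hs
  have hT : ∀ l, T n ≤ u l := fun l => hn.trans (hu (Fin.zero_le l))
  refine ⟨n, ?_⟩
  rcases hn.eq_or_lt with h0 | h0
  · have hne : ∑ l, u l ≠ k * T n + n := fun h => hnot n (mem_Pset_iff.2 ⟨hu, h0.symm, h⟩)
    rw [← h0] at hs
    exact exists_follower_mem_Pset_of_keep hT (i := 0) (j := 0) (fun _ => h0.symm)
      (by omega) (by omega) (by omega)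
  have hlt : k * T n + n < ∑ l, u l := by
    have := Nat.mul_lt_mul_of_pos_left h0 (NeZero.pos k)
    omega
  let i1 : Fin k := ⟨1, by omega⟩
  have hi1 : (0 : Fin k) ≠ i1 := by simp [i1, Fin.ext_iff]
  by_cases h1 : u i1 ≤ T n + n
  · have hku : k * T n + u 0 ≤ k * u 0 + T n := by nlinarith
    exact exists_follower_mem_Pset_of_keep hT (i := 0) (j := i1) (absurd · hi1) h1
      (by omega) hlt
  · let i2 : Fin k := ⟨2, by omega⟩
    have hi12 : i2 ≠ i1 := by simp [i1, i2, Fin.ext_iff]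
    set g := Function.update u i1 (T n)
    have hg : ∀ l, T n ≤ g l := fun l => by
      rcases eq_or_ne l i1 with rfl | h <;> simp [g, *]
    have hbound := card_mul_add_sub_le_sum (mem_univ i2) fun l _ => hg l
    rw [card_fin, show g i2 = u i2 from Function.update_of_ne hi12 _ _] at hbound
    have hg_sum : ∑ l, g l + u i1 = ∑ l, u l + T n := sum_update_add_self u i1 (T n)
    have hi2 : u i1 ≤ u i2 := hu (by simp [i1, i2, Fin.le_def])
    exact exists_follower_mem_Pset_of_keep hT (i := i1) (j := 0) (absurd ·.symm hi1)
      (by omega) (by omega) hlt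

end Game

/-- For every `k ≥ 3`, the set `𝒫 = ⋃ n, Pₙ` satisfies the defining
property of the P-positions: a position is in `𝒫` iff every follower of it lies
outside `𝒫`. -/
theorem union_Pset_is_P_set (k : ℕ) [NeZero k] (hk : 3 ≤ k)
    (u : Fin k → ℕ) (hu : Monotone u) :
    (u ∈ ⋃ n, Pset k n) ↔ ∀ v, Follower k u v → v ∉ ⋃ n, Pset k n := by
  simp only [Set.mem_iUnion, not_exists]
  constructor
  · rintro ⟨n, hn⟩ v hf m hm
    exact notMem_Pset_of_follower hn hf hm
  · intro h
    by_contra! hnot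
    obtain ⟨n, v, hf, hv⟩ := exists_follower_mem_Pset hk hu hnot
    exact h v hf n hv
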